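/- arXiv:1005.4138 — 2 statements merged into one kernel-verified Lean document; each statement's English description precedes it below -/
import Mathlib

section
/- Let a < b and c < d be real numbers, Δ = [a,b] × [c,d], and let f : Δ → ℝ be coordinated convex on Δ and integrable on Δ. Then f((a+b)/2, (c+d)/2) ≤ (1/((b-a)(d-c))) ∫_a^b ∫_c^d f(x,y) dy dx. -/
/-!
Taking `t = s = 1/2` in coordinated convexity bounds `f` at the centre of the rectangle by the
mean of `f` over the orbit of a point under the reflections `x ↦ a + b - x`, `y ↦ c + d - y`.
These reflections preserve Lebesgue measure and the rectangle, so integrating the bound over the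
rectangle gives `(b - a) (d - c) f(centre) ≤ ∬ f`; Fubini turns the double integral into the
iterated one.
-/

open MeasureTheory Set intervalIntegral

def CoordinatedConvexOn (s t : Set ℝ) (f : ℝ → ℝ → ℝ) : Prop :=
  ∀ θ ∈ Icc (0:ℝ) 1, ∀ η ∈ Icc (0:ℝ) 1, ∀ x ∈ s, ∀ y ∈ s, ∀ u ∈ t, ∀ w ∈ t,
    f (θ * x + (1 - θ) * y) (η * u + (1 - η) * w) ≤
      θ * η * f x u + η * (1 - θ) * f y u + θ * (1 - η) * f x w
        + (1 - θ) * (1 - η) * f y w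

theorem CoordinatedConvexOn.map_midpoint_le {s t : Set ℝ} {f : ℝ → ℝ → ℝ}
    (hf : CoordinatedConvexOn s t f) {x y u w : ℝ} (hx : x ∈ s) (hy : y ∈ s) (hu : u ∈ t)
    (hw : w ∈ t) :
    f ((x + y) / 2) ((u + w) / 2) ≤ (f x u + f y u + f x w + f y w) / 4 := by
  have half : (1 / 2 : ℝ) ∈ Icc (0 : ℝ) 1 := by norm_num
  convert hf _ half _ half x hx y hy u hu w hw using 1
  · ring_nf
  · ring

theorem preimage_add_sub_Icc_self (a b : ℝ) : (fun x => a + b - x) ⁻¹' Icc a b = Icc a b := by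
  rw [preimage_const_sub_Icc, add_sub_cancel_right, add_sub_cancel_left]

namespace MeasureTheory.MeasurePreserving

variable {α β E : Type*} [MeasurableSpace α] [MeasurableSpace β] [NormedAddCommGroup E]
  {μ : Measure α} {ν : Measure β} [SFinite μ] [SFinite ν]
  {s : Set α} {t : Set β} {e₁ : α → α} {e₂ : β → β}

theorem integrableOn_prod_comp_prodMap (h₁ : MeasurePreserving e₁ μ μ)
    (h₂ : MeasurePreserving e₂ ν ν) (he₁ : MeasurableEmbedding e₁) (he₂ : MeasurableEmbedding e₂)
    (hs : e₁ ⁻¹' s = s) (ht : e₂ ⁻¹' t = t) {g : α × β → E}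
    (hg : IntegrableOn g (s ×ˢ t) (μ.prod ν)) :
    IntegrableOn (fun p => g (e₁ p.1, e₂ p.2)) (s ×ˢ t) (μ.prod ν) := by
  have := ((h₁.prod h₂).integrableOn_comp_preimage (he₁.prodMap he₂) (f := g)
    (s := s ×ˢ t)).2 hg
  rwa [preimage_prod_map_prod, hs, ht] at this

theorem setIntegral_prod_comp_prodMap [NormedSpace ℝ E] (h₁ : MeasurePreserving e₁ μ μ)
    (h₂ : MeasurePreserving e₂ ν ν) (he₁ : MeasurableEmbedding e₁) (he₂ : MeasurableEmbedding e₂)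
    (hs : e₁ ⁻¹' s = s) (ht : e₂ ⁻¹' t = t) (g : α × β → E) :
    ∫ p in s ×ˢ t, g (e₁ p.1, e₂ p.2) ∂μ.prod ν = ∫ p in s ×ˢ t, g p ∂μ.prod ν := by
  have := (h₁.prod h₂).setIntegral_preimage_emb (he₁.prodMap he₂) g (s ×ˢ t)
  rwa [preimage_prod_map_prod, hs, ht] at this

end MeasureTheory.MeasurePreserving

theorem setIntegral_Icc_prod_Icc_eq_intervalIntegral {E : Type*} [NormedAddCommGroup E]
    [NormedSpace ℝ E] {a b c d : ℝ} (hab : a ≤ b) (hcd : c ≤ d) {f : ℝ → ℝ → E}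
    (hf : IntegrableOn (fun p : ℝ × ℝ => f p.1 p.2) (Icc a b ×ˢ Icc c d)) :
    ∫ p in Icc a b ×ˢ Icc c d, f p.1 p.2 = ∫ x in a..b, ∫ y in c..d, f x y := by
  rw [Measure.volume_eq_prod, setIntegral_prod _ hf, integral_of_le hab,
    integral_Icc_eq_integral_Ioc]
  simp_rw [integral_of_le hcd, integral_Icc_eq_integral_Ioc]

section Reflection

variable {a b : ℝ} {s t : Set ℝ} {g : ℝ × ℝ → ℝ}

theorem MeasureTheory.IntegrableOn.comp_reflect_fst (hg : IntegrableOn g (Icc a b ×ˢ t)) :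
    IntegrableOn (fun p => g (a + b - p.1, p.2)) (Icc a b ×ˢ t) :=
  (volume.measurePreserving_sub_left (a + b)).integrableOn_prod_comp_prodMap (.id volume)
    (measurableEmbedding_subLeft _) .id (preimage_add_sub_Icc_self a b) preimage_id hg

theorem MeasureTheory.IntegrableOn.comp_reflect_snd (hg : IntegrableOn g (s ×ˢ Icc a b)) :
    IntegrableOn (fun p => g (p.1, a + b - p.2)) (s ×ˢ Icc a b) :=
  (MeasurePreserving.id volume).integrableOn_prod_comp_prodMap
    (volume.measurePreserving_sub_left (a + b)) .id (measurableEmbedding_subLeft _) preimage_id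
    (preimage_add_sub_Icc_self a b) hg

theorem setIntegral_comp_reflect_fst (g : ℝ × ℝ → ℝ) :
    ∫ p in Icc a b ×ˢ t, g (a + b - p.1, p.2) = ∫ p in Icc a b ×ˢ t, g p :=
  (volume.measurePreserving_sub_left (a + b)).setIntegral_prod_comp_prodMap (.id volume)
    (measurableEmbedding_subLeft _) .id (preimage_add_sub_Icc_self a b) preimage_id g

theorem setIntegral_comp_reflect_snd (g : ℝ × ℝ → ℝ) :
    ∫ p in s ×ˢ Icc a b, g (p.1, a + b - p.2) = ∫ p in s ×ˢ Icc a b, g p :=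
  (MeasurePreserving.id volume).setIntegral_prod_comp_prodMap
    (volume.measurePreserving_sub_left (a + b)) .id (measurableEmbedding_subLeft _) preimage_id
    (preimage_add_sub_Icc_self a b) g

end Reflection

noncomputable def reflectionMean (a b c d : ℝ) (g : ℝ × ℝ → ℝ) (p : ℝ × ℝ) : ℝ :=
  (g p + g (a + b - p.1, p.2) + g (p.1, c + d - p.2) + g (a + b - p.1, c + d - p.2)) / 4

theorem CoordinatedConvexOn.map_midpoint_le_reflectionMean {a b c d : ℝ} {f : ℝ → ℝ → ℝ}
    (hf : CoordinatedConvexOn (Icc a b) (Icc c d) f) {p : ℝ × ℝ} (hp : p ∈ Icc a b ×ˢ Icc c d) :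
    f ((a + b) / 2) ((c + d) / 2) ≤ reflectionMean a b c d (fun p => f p.1 p.2) p := by
  obtain ⟨hx, hy⟩ := hp
  have hx' : a + b - p.1 ∈ Icc a b := by rwa [← preimage_add_sub_Icc_self] at hx
  have hy' : c + d - p.2 ∈ Icc c d := by rwa [← preimage_add_sub_Icc_self] at hy
  simpa only [reflectionMean, add_sub_cancel] using hf.map_midpoint_le hx hx' hy hy'

section reflectionMean

variable {a b c d : ℝ} {g : ℝ × ℝ → ℝ}

theorem integrableOn_reflectionMean (hg : IntegrableOn g (Icc a b ×ˢ Icc c d)) :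
    IntegrableOn (reflectionMean a b c d g) (Icc a b ×ˢ Icc c d) :=
  (((hg.add hg.comp_reflect_fst).add hg.comp_reflect_snd).add
    hg.comp_reflect_snd.comp_reflect_fst).div_const 4

theorem setIntegral_reflectionMean (hg : IntegrableOn g (Icc a b ×ˢ Icc c d)) :
    ∫ p in Icc a b ×ˢ Icc c d, reflectionMean a b c d g p = ∫ p in Icc a b ×ˢ Icc c d, g p := by
  have i₁₂ : IntegrableOn (fun p => g (a + b - p.1, c + d - p.2)) (Icc a b ×ˢ Icc c d) :=
    hg.comp_reflect_snd.comp_reflect_fst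
  have h₁₂ : ∫ p in Icc a b ×ˢ Icc c d, g (a + b - p.1, c + d - p.2) =
      ∫ p in Icc a b ×ˢ Icc c d, g p := by
    rw [setIntegral_comp_reflect_fst (fun p => g (p.1, c + d - p.2)), setIntegral_comp_reflect_snd]
  simp only [reflectionMean]
  rw [MeasureTheory.integral_div, integral_add _ i₁₂, integral_add _ hg.comp_reflect_snd,
    integral_add hg hg.comp_reflect_fst, setIntegral_comp_reflect_fst,
    setIntegral_comp_reflect_snd, h₁₂]
  · ring
  · exact hg.add hg.comp_reflect_fst
  · exact (hg.add hg.comp_reflect_fst).add hg.comp_reflect_snd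

end reflectionMean

theorem CoordinatedConvexOn.volume_mul_map_midpoint_le_setIntegral {a b c d : ℝ} (hab : a ≤ b)
    (hcd : c ≤ d) {f : ℝ → ℝ → ℝ} (hf : CoordinatedConvexOn (Icc a b) (Icc c d) f)
    (hint : IntegrableOn (fun p : ℝ × ℝ => f p.1 p.2) (Icc a b ×ˢ Icc c d)) :
    (b - a) * (d - c) * f ((a + b) / 2) ((c + d) / 2) ≤
      ∫ p in Icc a b ×ˢ Icc c d, f p.1 p.2 := by
  have hvol : volume.real (Icc a b ×ˢ Icc c d) = (b - a) * (d - c) := by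
    rw [Measure.volume_eq_prod, measureReal_prod_prod, Real.volume_real_Icc_of_le hab,
      Real.volume_real_Icc_of_le hcd]
  calc (b - a) * (d - c) * f ((a + b) / 2) ((c + d) / 2)
      = ∫ _ in Icc a b ×ˢ Icc c d, f ((a + b) / 2) ((c + d) / 2) := by
        rw [setIntegral_const, hvol, smul_eq_mul]
    _ ≤ ∫ p in Icc a b ×ˢ Icc c d, reflectionMean a b c d (fun p => f p.1 p.2) p :=
        setIntegral_mono_on
          (integrableOn_const (isCompact_Icc.prod isCompact_Icc).measure_lt_top.ne)
          (integrableOn_reflectionMean hint) (measurableSet_Icc.prod measurableSet_Icc)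
          fun _ hp => hf.map_midpoint_le_reflectionMean hp
    _ = ∫ p in Icc a b ×ˢ Icc c d, f p.1 p.2 := setIntegral_reflectionMean hint

/-- Left Hermite–Hadamard inequality for coordinated convex functions:
`f((a+b)/2, (c+d)/2) ≤ (1/((b-a)(d-c))) ∫_a^b ∫_c^d f(x,y) dy dx`. -/
theorem hadamard_coordinated_convex_left
    (a b c d : ℝ) (hab : a < b) (hcd : c < d) (f : ℝ → ℝ → ℝ)
    (hconv : ∀ t ∈ Icc (0:ℝ) 1, ∀ s ∈ Icc (0:ℝ) 1,
      ∀ x ∈ Icc a b, ∀ y ∈ Icc a b, ∀ u ∈ Icc c d, ∀ w ∈ Icc c d,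
        f (t * x + (1 - t) * y) (s * u + (1 - s) * w) ≤
          t * s * f x u + s * (1 - t) * f y u + t * (1 - s) * f x w
            + (1 - t) * (1 - s) * f y w)
    (hint : IntegrableOn (fun p : ℝ × ℝ => f p.1 p.2) (Icc a b ×ˢ Icc c d)) :
    f ((a + b) / 2) ((c + d) / 2) ≤
      (1 / ((b - a) * (d - c))) * ∫ x in a..b, ∫ y in c..d, f x y := by
  have harea : 0 < (b - a) * (d - c) := mul_pos (sub_pos.2 hab) (sub_pos.2 hcd)
  have key := CoordinatedConvexOn.volume_mul_map_midpoint_le_setIntegral hab.le hcd.le hconv hint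
  rw [setIntegral_Icc_prod_Icc_eq_intervalIntegral hab.le hcd.le hint] at key
  rw [one_div, inv_mul_eq_div, le_div_iff₀ harea, mul_comm]
  exact key
end

section
/- Let a < b and c < d be real numbers, Δ = [a,b] × [c,d], let f : Δ → ℝ be (L₁, L₂)-Lipschitz on Δ with L₁, L₂ > 0, and define H : [0,1] × [0,1] → ℝ by H(t,s) = (1/((b-a)(d-c))) ∫_a^b ∫_c^d f(t·x + (1-t)·(a+b)/2, s·y + (1-s)·(c+d)/2) dy dx. Then for all t, s ∈ [0,1], |H(t,s) − f((a+b)/2, (c+d)/2)| ≤ (L₁·t/4)·(b-a) + (L₂·s/4)·(d-c). -/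
open MeasureTheory Set intervalIntegral

/-! The maps `x ↦ t x + (1 - t) (a + b)/2` and `y ↦ s y + (1 - s) (c + d)/2` are homotheties
centred at the midpoints, so the integrand of `H(t,s)` is an `(L₁ t, L₂ s)`-Lipschitz function `g`
on `Δ` taking the value `f((a+b)/2, (c+d)/2)` at the centre. For any `(K₁, K₂)`-Lipschitz `g`,
integrating `|g(x,y) - g((a+b)/2, (c+d)/2)| ≤ K₁ |x - (a+b)/2| + K₂ |y - (c+d)/2|` over `Δ`, with
`∫_a^b |x - (a+b)/2| dx = (b-a)²/4`, bounds the distance from the mean of `g` to its central value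
by `K₁ (b-a)/4 + K₂ (d-c)/4`. -/

def LipschitzOnProd (L₁ L₂ : ℝ) (f : ℝ → ℝ → ℝ) (S T : Set ℝ) : Prop :=
  ∀ x₁ ∈ S, ∀ x₂ ∈ S, ∀ y₁ ∈ T, ∀ y₂ ∈ T, |f x₁ y₁ - f x₂ y₂| ≤ L₁ * |x₁ - x₂| + L₂ * |y₁ - y₂|

lemma add_div_two_mem_Icc {a b : ℝ} (hab : a ≤ b) : (a + b) / 2 ∈ Icc a b :=
  ⟨by linarith, by linarith⟩

lemma integral_abs_sub_midpoint {a b : ℝ} (hab : a ≤ b) :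
    ∫ x in a..b, |x - (a + b) / 2| = (b - a) ^ 2 / 4 := by
  obtain ⟨ham, hmb⟩ := add_div_two_mem_Icc hab
  set m := (a + b) / 2
  have hint : ∀ u v : ℝ, IntervalIntegrable (fun x => |x - m|) volume u v := fun u v =>
    (continuous_id.sub continuous_const).abs.intervalIntegrable u v
  have hleft : ∫ x in a..m, |x - m| = ∫ x in a..m, (m - x) := by
    refine integral_congr fun x hx => ?_
    rw [uIcc_of_le ham] at hx
    simp only [abs_of_nonpos (sub_nonpos.2 hx.2), neg_sub]
  have hright : ∫ x in m..b, |x - m| = ∫ x in m..b, (x - m) := by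
    refine integral_congr fun x hx => ?_
    rw [uIcc_of_le hmb] at hx
    simp only [abs_of_nonneg (sub_nonneg.2 hx.1)]
  rw [← integral_add_adjacent_intervals (hint a m) (hint m b), hleft, hright,
    integral_sub intervalIntegrable_const intervalIntegrable_id,
    integral_sub intervalIntegrable_id intervalIntegrable_const]
  simp only [integral_id, intervalIntegral.integral_const, smul_eq_mul]
  ring

lemma integral_mul_abs_sub_midpoint_add {a b : ℝ} (hab : a ≤ b) (α β : ℝ) :
    ∫ x in a..b, (α * |x - (a + b) / 2| + β) = α * ((b - a) ^ 2 / 4) + (b - a) * β := by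
  have hint : IntervalIntegrable (fun x => α * |x - (a + b) / 2|) volume a b :=
    (continuous_const.mul (continuous_id.sub continuous_const).abs).intervalIntegrable a b
  rw [integral_add hint intervalIntegrable_const, intervalIntegral.integral_const_mul,
    integral_abs_sub_midpoint hab, intervalIntegral.integral_const, smul_eq_mul]

lemma abs_integral_sub_mul_le {g u : ℝ → ℝ} {a b C : ℝ} (hab : a ≤ b)
    (hg : IntervalIntegrable g volume a b) (hu : IntervalIntegrable u volume a b)
    (h : ∀ x ∈ Icc a b, |g x - C| ≤ u x) :
    |(∫ x in a..b, g x) - (b - a) * C| ≤ ∫ x in a..b, u x := by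
  have hsub : (∫ x in a..b, g x) - (b - a) * C = ∫ x in a..b, (g x - C) := by
    rw [integral_sub hg intervalIntegrable_const, intervalIntegral.integral_const, smul_eq_mul]
  rw [hsub]
  exact (abs_integral_le_integral_abs hab).trans
    (integral_mono_on hab (hg.sub intervalIntegrable_const).abs hu h)

lemma intervalIntegrable_of_abs_sub_le {g : ℝ → ℝ} {K a b : ℝ} {S : Set ℝ}
    (hg : ∀ x₁ ∈ S, ∀ x₂ ∈ S, |g x₁ - g x₂| ≤ K * |x₁ - x₂|) (hS : uIcc a b ⊆ S) :
    IntervalIntegrable g volume a b :=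
  ((LipschitzOnWith.of_dist_le' hg).continuousOn.mono hS).intervalIntegrable

lemma Convex.mul_add_one_sub_mul_mem {U : Set ℝ} (hU : Convex ℝ U) {x m r : ℝ} (hx : x ∈ U)
    (hm : m ∈ U) (hr : r ∈ Icc (0 : ℝ) 1) : r * x + (1 - r) * m ∈ U :=
  hU hx hm hr.1 (sub_nonneg.2 hr.2) (by ring)

lemma abs_homothety_sub_homothety (m : ℝ) {r : ℝ} (hr : 0 ≤ r) (x₁ x₂ : ℝ) :
    |(r * x₁ + (1 - r) * m) - (r * x₂ + (1 - r) * m)| = r * |x₁ - x₂| := by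
  rw [show r * x₁ + (1 - r) * m - (r * x₂ + (1 - r) * m) = r * (x₁ - x₂) by ring, abs_mul,
    abs_of_nonneg hr]

namespace LipschitzOnProd

variable {L₁ L₂ a b c d : ℝ} {f : ℝ → ℝ → ℝ} {S T : Set ℝ}

lemma intervalIntegrable_right (hf : LipschitzOnProd L₁ L₂ f S T) {x : ℝ} (hx : x ∈ S)
    (hT : uIcc c d ⊆ T) : IntervalIntegrable (f x) volume c d :=
  intervalIntegrable_of_abs_sub_le (fun y₁ hy₁ y₂ hy₂ => by
    simpa using hf x hx x hx y₁ hy₁ y₂ hy₂) hT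

lemma abs_integral_sub_integral_le (hf : LipschitzOnProd L₁ L₂ f S T) (hcd : c ≤ d)
    (hT : uIcc c d ⊆ T) {x₁ x₂ : ℝ} (hx₁ : x₁ ∈ S) (hx₂ : x₂ ∈ S) :
    |(∫ y in c..d, f x₁ y) - ∫ y in c..d, f x₂ y| ≤ (d - c) * L₁ * |x₁ - x₂| := by
  have hint₁ := hf.intervalIntegrable_right hx₁ hT
  have hint₂ := hf.intervalIntegrable_right hx₂ hT
  rw [← integral_sub hint₁ hint₂]
  calc |∫ y in c..d, (f x₁ y - f x₂ y)|
      ≤ ∫ y in c..d, |f x₁ y - f x₂ y| := abs_integral_le_integral_abs hcd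
    _ ≤ ∫ _ in c..d, L₁ * |x₁ - x₂| :=
        integral_mono_on hcd (hint₁.sub hint₂).abs intervalIntegrable_const fun y hy => by
          simpa using hf x₁ hx₁ x₂ hx₂ y (hT (Icc_subset_uIcc hy)) y (hT (Icc_subset_uIcc hy))
    _ = (d - c) * L₁ * |x₁ - x₂| := by rw [intervalIntegral.integral_const, smul_eq_mul, mul_assoc]

lemma intervalIntegrable_integral (hf : LipschitzOnProd L₁ L₂ f S T) (hcd : c ≤ d)
    (hT : uIcc c d ⊆ T) (hS : uIcc a b ⊆ S) :
    IntervalIntegrable (fun x => ∫ y in c..d, f x y) volume a b :=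
  intervalIntegrable_of_abs_sub_le
    (fun _ hx₁ _ hx₂ => hf.abs_integral_sub_integral_le hcd hT hx₁ hx₂) hS

lemma comp_homothety (hf : LipschitzOnProd L₁ L₂ f S T) (hS : Convex ℝ S) (hT : Convex ℝ T)
    {m₁ m₂ t s : ℝ} (hm₁ : m₁ ∈ S) (hm₂ : m₂ ∈ T) (ht : t ∈ Icc (0 : ℝ) 1)
    (hs : s ∈ Icc (0 : ℝ) 1) :
    LipschitzOnProd (L₁ * t) (L₂ * s)
      (fun x y => f (t * x + (1 - t) * m₁) (s * y + (1 - s) * m₂)) S T := by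
  intro x₁ hx₁ x₂ hx₂ y₁ hy₁ y₂ hy₂
  have := hf _ (hS.mul_add_one_sub_mul_mem hx₁ hm₁ ht) _ (hS.mul_add_one_sub_mul_mem hx₂ hm₁ ht)
    _ (hT.mul_add_one_sub_mul_mem hy₁ hm₂ hs) _ (hT.mul_add_one_sub_mul_mem hy₂ hm₂ hs)
  rwa [abs_homothety_sub_homothety m₁ ht.1, abs_homothety_sub_homothety m₂ hs.1, ← mul_assoc,
    ← mul_assoc] at this

lemma abs_integral_integral_sub_midpoint_le (hf : LipschitzOnProd L₁ L₂ f (Icc a b) (Icc c d))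
    (hab : a ≤ b) (hcd : c ≤ d) :
    |(∫ x in a..b, ∫ y in c..d, f x y) - (b - a) * ((d - c) * f ((a + b) / 2) ((c + d) / 2))| ≤
      L₁ * (d - c) * ((b - a) ^ 2 / 4) + (b - a) * (L₂ * ((d - c) ^ 2 / 4)) := by
  set m₁ := (a + b) / 2
  set m₂ := (c + d) / 2
  have hm₁ : m₁ ∈ Icc a b := add_div_two_mem_Icc hab
  have hm₂ : m₂ ∈ Icc c d := add_div_two_mem_Icc hcd
  have hS : uIcc a b ⊆ Icc a b := (uIcc_of_le hab).subset
  have hT : uIcc c d ⊆ Icc c d := (uIcc_of_le hcd).subset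
  have inner : ∀ x ∈ Icc a b, |(∫ y in c..d, f x y) - (d - c) * f m₁ m₂| ≤
      L₁ * (d - c) * |x - m₁| + L₂ * ((d - c) ^ 2 / 4) := by
    intro x hx
    calc _ ≤ ∫ y in c..d, (L₂ * |y - m₂| + L₁ * |x - m₁|) :=
          abs_integral_sub_mul_le hcd (hf.intervalIntegrable_right hx hT)
            ((by fun_prop : Continuous fun y => L₂ * |y - m₂| + L₁ * |x - m₁|).intervalIntegrable
              _ _)
            fun y hy => (hf x hx m₁ hm₁ y hy m₂ hm₂).trans_eq (add_comm _ _)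
      _ = _ := by rw [integral_mul_abs_sub_midpoint_add hcd]; ring
  calc _ ≤ ∫ x in a..b, (L₁ * (d - c) * |x - m₁| + L₂ * ((d - c) ^ 2 / 4)) :=
        abs_integral_sub_mul_le hab (hf.intervalIntegrable_integral hcd hT hS)
          ((by fun_prop : Continuous fun x =>
            L₁ * (d - c) * |x - m₁| + L₂ * ((d - c) ^ 2 / 4)).intervalIntegrable _ _) inner
    _ = _ := integral_mul_abs_sub_midpoint_add hab _ _

lemma abs_average_sub_midpoint_le (hf : LipschitzOnProd L₁ L₂ f (Icc a b) (Icc c d))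
    (hab : a < b) (hcd : c < d) :
    |1 / ((b - a) * (d - c)) * (∫ x in a..b, ∫ y in c..d, f x y) -
      f ((a + b) / 2) ((c + d) / 2)| ≤
      L₁ / 4 * (b - a) + L₂ / 4 * (d - c) := by
  have hba : 0 < b - a := sub_pos.2 hab
  have hdc : 0 < d - c := sub_pos.2 hcd
  have hscale : ∀ u v : ℝ, 1 / ((b - a) * (d - c)) * u - v =
      1 / ((b - a) * (d - c)) * (u - (b - a) * ((d - c) * v)) := fun u v => by
    field_simp
  rw [hscale, abs_mul, abs_of_pos (by positivity)]
  calc _ ≤ 1 / ((b - a) * (d - c)) *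
        (L₁ * (d - c) * ((b - a) ^ 2 / 4) + (b - a) * (L₂ * ((d - c) ^ 2 / 4))) :=
        mul_le_mul_of_nonneg_left (hf.abs_integral_integral_sub_midpoint_le hab.le hcd.le)
          (by positivity)
    _ = _ := by field_simp

end LipschitzOnProd

theorem mapping_H_midpoint_bound_general
    (a b c d L₁ L₂ : ℝ) (hab : a < b) (hcd : c < d)
    (f : ℝ → ℝ → ℝ)
    (hf : ∀ t₁ ∈ Icc a b, ∀ t₂ ∈ Icc a b, ∀ s₁ ∈ Icc c d, ∀ s₂ ∈ Icc c d,
      |f t₁ s₁ - f t₂ s₂| ≤ L₁ * |t₁ - t₂| + L₂ * |s₁ - s₂|)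
    (H : ℝ → ℝ → ℝ)
    (hH : ∀ t s, H t s = (1 / ((b - a) * (d - c))) *
      ∫ x in a..b, ∫ y in c..d,
        f (t * x + (1 - t) * ((a + b) / 2)) (s * y + (1 - s) * ((c + d) / 2))) :
    ∀ t ∈ Icc (0:ℝ) 1, ∀ s ∈ Icc (0:ℝ) 1,
      |H t s - f ((a + b) / 2) ((c + d) / 2)| ≤
        (L₁ * t / 4) * (b - a) + (L₂ * s / 4) * (d - c) := by
  intro t ht s hs
  have hg := LipschitzOnProd.comp_homothety (hf : LipschitzOnProd L₁ L₂ f (Icc a b) (Icc c d))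
    (convex_Icc a b) (convex_Icc c d) (add_div_two_mem_Icc hab.le) (add_div_two_mem_Icc hcd.le)
    ht hs
  have hcentre : f (t * ((a + b) / 2) + (1 - t) * ((a + b) / 2))
      (s * ((c + d) / 2) + (1 - s) * ((c + d) / 2)) = f ((a + b) / 2) ((c + d) / 2) := by
    ring_nf
  rw [hH, ← hcentre]
  exact hg.abs_average_sub_midpoint_le hab hcd

/-- Theorem 7(ii), inequality (3.1): for the mapping
`H(t,s) = (1/((b-a)(d-c))) ∫_a^b ∫_c^d f(tx+(1-t)(a+b)/2, sy+(1-s)(c+d)/2) dy dx`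
associated with an `(L₁, L₂)`-Lipschitz function `f` on `[a,b] × [c,d]`,
`|H(t,s) − f((a+b)/2,(c+d)/2)| ≤ (L₁ t/4)(b-a) + (L₂ s/4)(d-c)` for `t,s ∈ [0,1]`. -/
theorem mapping_H_midpoint_bound
    (a b c d L₁ L₂ : ℝ) (hab : a < b) (hcd : c < d) (hL₁ : 0 < L₁) (hL₂ : 0 < L₂)
    (f : ℝ → ℝ → ℝ)
    (hf : ∀ t₁ ∈ Icc a b, ∀ t₂ ∈ Icc a b, ∀ s₁ ∈ Icc c d, ∀ s₂ ∈ Icc c d,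
      |f t₁ s₁ - f t₂ s₂| ≤ L₁ * |t₁ - t₂| + L₂ * |s₁ - s₂|)
    (H : ℝ → ℝ → ℝ)
    (hH : ∀ t s, H t s = (1 / ((b - a) * (d - c))) *
      ∫ x in a..b, ∫ y in c..d,
        f (t * x + (1 - t) * ((a + b) / 2)) (s * y + (1 - s) * ((c + d) / 2))) :
    ∀ t ∈ Icc (0:ℝ) 1, ∀ s ∈ Icc (0:ℝ) 1,
      |H t s - f ((a + b) / 2) ((c + d) / 2)| ≤
        (L₁ * t / 4) * (b - a) + (L₂ * s / 4) * (d - c) :=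
  mapping_H_midpoint_bound_general a b c d L₁ L₂ hab hcd f hf H hH
end
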